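/- arXiv:2302.13550 — 2 statements merged into one kernel-verified Lean document; each statement's English description precedes it below -/
import Mathlib

section
/- For one-dimensional Gaussian measures μ = N(m, σ²) and μ* = N(m*, σ*²) on ℝ with σ, σ* ≥ 0, the squared 2-Wasserstein distance satisfies W₂(μ, μ*)² = (m − m*)² + (σ − σ*)². -/
open MeasureTheory ProbabilityTheory Real Filter
open scoped ENNReal NNReal


lemma tendsto_exp_neg_sq {b : ℝ} (hb : 0 < b) :
    Tendsto (fun x : ℝ => rexp (-b * x ^ 2)) (Filter.cocompact ℝ) (nhds 0) := by
  have := tendsto_rpow_abs_mul_exp_neg_mul_sq_cocompact hb 0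
  simpa using this

lemma tendsto_mul_exp_neg_sq {b : ℝ} (hb : 0 < b) :
    Tendsto (fun x : ℝ => x * rexp (-b * x ^ 2)) (Filter.cocompact ℝ) (nhds 0) := by
  have h := tendsto_rpow_abs_mul_exp_neg_mul_sq_cocompact hb 1
  refine squeeze_zero_norm (fun x => ?_) h
  rw [Real.rpow_one, norm_mul]
  simp [abs_of_nonneg (le_of_lt (Real.exp_pos _))]

lemma integrable_sq_mul_exp {b : ℝ} (hb : 0 < b) :
    Integrable (fun x : ℝ => x ^ 2 * rexp (-b * x ^ 2)) := by
  have := integrable_rpow_mul_exp_neg_mul_sq hb (s := 2) (by norm_num)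
  refine this.congr (Filter.Eventually.of_forall fun x => ?_)
  have h2 : x ^ (2:ℝ) = x ^ (2:ℕ) := by
    rw [← Real.rpow_natCast x 2]; norm_num
  simp only [h2]

lemma integral_mul_exp_eq_zero {b : ℝ} (hb : 0 < b) :
    ∫ x : ℝ, x * rexp (-b * x ^ 2) = 0 := by
  have hderiv : ∀ x : ℝ, HasDerivAt (fun x : ℝ => -(2*b)⁻¹ * rexp (-b * x ^ 2))
      (x * rexp (-b * x ^ 2)) x := by
    intro x
    have h1 : HasDerivAt (fun x : ℝ => -b * x ^ 2) (-b * (2 * x)) x := by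
      simpa using ((hasDerivAt_pow 2 x).const_mul (-b))
    have := (h1.exp).const_mul (-(2*b)⁻¹)
    refine this.congr_deriv ?_
    field_simp
  have hint : Integrable (fun x : ℝ => x * rexp (-b * x ^ 2)) :=
    integrable_mul_exp_neg_mul_sq hb
  have hco : Tendsto (fun x : ℝ => -(2*b)⁻¹ * rexp (-b * x ^ 2)) (Filter.cocompact ℝ) (nhds 0) := by
    simpa using ((tendsto_exp_neg_sq hb).const_mul (-(2*b)⁻¹))
  rw [cocompact_eq_atBot_atTop, tendsto_sup] at hco
  rw [integral_of_hasDerivAt_of_tendsto hderiv hint hco.1 hco.2, sub_zero]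

lemma integral_sq_mul_exp {b : ℝ} (hb : 0 < b) :
    ∫ x : ℝ, x ^ 2 * rexp (-b * x ^ 2) = Real.sqrt (π / b) / (2 * b) := by
  have hderiv : ∀ x : ℝ, HasDerivAt (fun x : ℝ => x * rexp (-b * x ^ 2))
      (rexp (-b * x ^ 2) - 2 * b * (x ^ 2 * rexp (-b * x ^ 2))) x := by
    intro x
    have h1 : HasDerivAt (fun x : ℝ => -b * x ^ 2) (-b * (2 * x)) x := by
      simpa using ((hasDerivAt_pow 2 x).const_mul (-b))
    have := (hasDerivAt_id x).mul h1.exp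
    refine this.congr_deriv ?_
    simp
    ring
  have hint : Integrable (fun x : ℝ => rexp (-b * x ^ 2) - 2 * b * (x ^ 2 * rexp (-b * x ^ 2))) :=
    (integrable_exp_neg_mul_sq hb).sub ((integrable_sq_mul_exp hb).const_mul _)
  have hco : Tendsto (fun x : ℝ => x * rexp (-b * x ^ 2)) (Filter.cocompact ℝ) (nhds 0) :=
    tendsto_mul_exp_neg_sq hb
  rw [cocompact_eq_atBot_atTop, tendsto_sup] at hco
  have h0 := integral_of_hasDerivAt_of_tendsto hderiv hint hco.1 hco.2
  rw [show (0:ℝ) - 0 = 0 by ring] at h0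
  rw [integral_sub (integrable_exp_neg_mul_sq hb) ((integrable_sq_mul_exp hb).const_mul _),
    integral_const_mul, integral_gaussian] at h0
  have hb' : (2:ℝ) * b ≠ 0 := by positivity
  field_simp at h0 ⊢
  linarith


lemma std_pdf_eq (x : ℝ) :
    gaussianPDFReal 0 1 x = (√(2*π))⁻¹ * rexp (-(1/2) * x^2) := by
  simp only [gaussianPDFReal, NNReal.coe_one, mul_one, sub_zero]
  ring_nf

lemma std_integral_eq (f : ℝ → ℝ) :
    ∫ x, f x ∂(gaussianReal 0 1) = ∫ x, gaussianPDFReal 0 1 x * f x := by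
  rw [gaussianReal_of_var_ne_zero _ one_ne_zero]
  have h : gaussianPDF (0:ℝ) 1 = fun x => ((gaussianPDFReal 0 1 x).toNNReal : ℝ≥0∞) := rfl
  rw [h, integral_withDensity_eq_integral_smul (measurable_gaussianPDFReal 0 1).real_toNNReal]
  congr 1
  ext x
  rw [NNReal.smul_def, smul_eq_mul, Real.coe_toNNReal _ (gaussianPDFReal_nonneg 0 1 x)]

lemma std_integrable_iff (f : ℝ → ℝ) :
    Integrable f (gaussianReal 0 1) ↔ Integrable (fun x => gaussianPDFReal 0 1 x * f x) := by
  rw [gaussianReal_of_var_ne_zero _ one_ne_zero]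
  have h : gaussianPDF (0:ℝ) 1 = fun x => ((gaussianPDFReal 0 1 x).toNNReal : ℝ≥0∞) := rfl
  rw [h]
  have hiff := integrable_withDensity_iff_integrable_smul
    (μ := (volume : Measure ℝ)) (measurable_gaussianPDFReal 0 1).real_toNNReal (g := f)
  rw [hiff]
  constructor <;> intro hi <;> refine hi.congr (Filter.Eventually.of_forall fun x => ?_) <;>
    simp only [NNReal.smul_def, smul_eq_mul, Real.coe_toNNReal _ (gaussianPDFReal_nonneg 0 1 x)]

lemma std_integrable_id : Integrable (fun x : ℝ => x) (gaussianReal 0 1) := by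
  rw [std_integrable_iff]
  refine ((integrable_mul_exp_neg_mul_sq one_half_pos).const_mul (√(2*π))⁻¹).congr
    (Filter.Eventually.of_forall fun x => ?_)
  simp only [std_pdf_eq]; ring

lemma std_integrable_sq : Integrable (fun x : ℝ => x^2) (gaussianReal 0 1) := by
  rw [std_integrable_iff]
  have : Integrable (fun x : ℝ => x ^ 2 * rexp (-(1/2) * x ^ 2)) := by
    have h2 : ∀ x:ℝ, x ^ (2:ℝ) = x ^ (2:ℕ) := fun x => by
      rw [← Real.rpow_natCast x 2]; norm_num
    have := integrable_rpow_mul_exp_neg_mul_sq one_half_pos (s := 2) (by norm_num)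
    refine this.congr (Filter.Eventually.of_forall fun x => ?_)
    simp only [h2]
  refine (this.const_mul (√(2*π))⁻¹).congr (Filter.Eventually.of_forall fun x => ?_)
  simp only [std_pdf_eq]; ring



lemma std_integral_id : ∫ x, x ∂(gaussianReal 0 1) = 0 := by
  rw [std_integral_eq]
  have : ∀ x:ℝ, gaussianPDFReal 0 1 x * x = (√(2*π))⁻¹ * (x * rexp (-(1/2) * x ^ 2)) := by
    intro x; rw [std_pdf_eq]; ring
  simp_rw [this]
  rw [integral_const_mul, integral_mul_exp_eq_zero one_half_pos, mul_zero]


lemma std_integral_sq : ∫ x, x^2 ∂(gaussianReal 0 1) = 1 := by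
  rw [std_integral_eq]
  have : ∀ x:ℝ, gaussianPDFReal 0 1 x * x^2 = (√(2*π))⁻¹ * (x^2 * rexp (-(1/2) * x ^ 2)) := by
    intro x; rw [std_pdf_eq]; ring
  simp_rw [this]
  rw [integral_const_mul, integral_sq_mul_exp one_half_pos]
  rw [show π / (1/2 : ℝ) = 2 * π by ring, show (2 * (1/2 : ℝ)) = 1 by norm_num, div_one]
  rw [inv_mul_cancel₀]
  positivity

lemma std_integrable_affine (c d : ℝ) :
    Integrable (fun x : ℝ => (c * x + d)^2) (gaussianReal 0 1) := by
  have h : ∀ x:ℝ, (c * x + d)^2 = c^2 * x^2 + (2*c*d) * x + d^2 := by intro x; ring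
  simp_rw [h]
  exact (((std_integrable_sq.const_mul _).add (std_integrable_id.const_mul _)).add
    (integrable_const _))

lemma std_integral_affine (c d : ℝ) :
    ∫ x, (c * x + d)^2 ∂(gaussianReal 0 1) = c^2 + d^2 := by
  have h : ∀ x:ℝ, (c * x + d)^2 = c^2 * x^2 + (2*c*d) * x + d^2 := by intro x; ring
  simp_rw [h]
  have hI1 : Integrable (fun x : ℝ => c^2 * x^2) (gaussianReal 0 1) :=
    std_integrable_sq.const_mul _
  have hI2 : Integrable (fun x : ℝ => (2*c*d) * x) (gaussianReal 0 1) :=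
    std_integrable_id.const_mul _
  have hI12 : Integrable (fun x : ℝ => c^2 * x^2 + (2*c*d) * x) (gaussianReal 0 1) := hI1.add hI2
  rw [integral_add hI12 (integrable_const _), integral_add hI1 hI2,
    integral_const_mul, integral_const_mul, std_integral_id, std_integral_sq, integral_const]
  simp

lemma gaussian_eq_map (m : ℝ) (σ : ℝ≥0) :
    gaussianReal m (σ^2) = (gaussianReal 0 1).map (fun x => (σ:ℝ) * x + m) := by
  have h1 : (gaussianReal 0 1).map (fun x => (σ:ℝ) * x) = gaussianReal 0 (σ^2) := by
    have := gaussianReal_map_const_mul (μ := 0) (v := 1) (σ:ℝ)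
    rw [this]
    congr 1
    · simp
    · ext; push_cast; simp [sq]
  have h2 : ((gaussianReal 0 (σ^2)).map (fun x => x + m)) = gaussianReal m (σ^2) := by
    rw [gaussianReal_map_add_const]; congr 1; simp
  rw [← h2, ← h1, Measure.map_map (by fun_prop) (by fun_prop)]
  rfl


lemma nu_integrable_id (m : ℝ) (σ : ℝ≥0) :
    Integrable (fun x : ℝ => x) (gaussianReal m (σ^2)) := by
  have hm1 : Measurable (fun x : ℝ => x) := measurable_id
  rw [gaussian_eq_map,
    integrable_map_measure hm1.aestronglyMeasurable (by fun_prop)]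
  exact (std_integrable_id.const_mul _).add (integrable_const m)

lemma nu_integral_id (m : ℝ) (σ : ℝ≥0) :
    ∫ x, x ∂(gaussianReal m (σ^2)) = m := by
  have hm1 : Measurable (fun x : ℝ => x) := measurable_id
  rw [gaussian_eq_map, integral_map (by fun_prop) hm1.aestronglyMeasurable]
  rw [integral_add (std_integrable_id.const_mul _) (integrable_const m),
    integral_const_mul, std_integral_id, integral_const]
  simp

lemma nu_integrable_sq (m : ℝ) (σ : ℝ≥0) :
    Integrable (fun x : ℝ => (x - m)^2) (gaussianReal m (σ^2)) := by
  have hm2 : Measurable (fun x : ℝ => (x - m)^2) := (measurable_id.sub_const m).pow_const 2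
  rw [gaussian_eq_map, integrable_map_measure hm2.aestronglyMeasurable (by fun_prop)]
  have : ((fun x : ℝ => (x - m)^2) ∘ fun x : ℝ => (σ:ℝ) * x + m)
      = fun x : ℝ => (σ:ℝ)^2 * x^2 := by ext x; simp [Function.comp]; ring
  rw [this]
  exact std_integrable_sq.const_mul _

lemma nu_integral_sq (m : ℝ) (σ : ℝ≥0) :
    ∫ x, (x - m)^2 ∂(gaussianReal m (σ^2)) = (σ:ℝ)^2 := by
  have hm2 : Measurable (fun x : ℝ => (x - m)^2) := (measurable_id.sub_const m).pow_const 2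
  rw [gaussian_eq_map, integral_map (by fun_prop)
    hm2.aestronglyMeasurable]
  have : ∀ x : ℝ, ((σ:ℝ) * x + m - m)^2 = (σ:ℝ)^2 * x^2 := fun x => by ring
  simp_rw [this]
  rw [integral_const_mul, std_integral_sq, mul_one]


/-- The squared 2-Wasserstein distance between one-dimensional Gaussians
`N(m, σ²)` and `N(m', σ'²)` equals `(m - m')² + (σ - σ')²`. -/
theorem stmt_5 (m m' : ℝ) (σ σ' : ℝ≥0) :
    sInf {r : ℝ≥0∞ | ∃ γ : Measure (ℝ × ℝ),
        IsProbabilityMeasure γ ∧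
        γ.map Prod.fst = gaussianReal m (σ ^ 2) ∧
        γ.map Prod.snd = gaussianReal m' (σ' ^ 2) ∧
        r = ∫⁻ p, ENNReal.ofReal ((p.1 - p.2) ^ 2) ∂γ}
      = ENNReal.ofReal ((m - m') ^ 2 + ((σ : ℝ) - (σ' : ℝ)) ^ 2) := by
  have hfm : Measurable (fun p : ℝ × ℝ => (p.1 - p.2)^2) :=
    (measurable_fst.sub measurable_snd).pow_const 2
  apply le_antisymm
  · -- upper bound
    apply sInf_le
    refine ⟨(gaussianReal 0 1).map (fun x => ((σ:ℝ)*x+m, (σ':ℝ)*x+m')), ?_, ?_, ?_, ?_⟩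
    · exact Measure.isProbabilityMeasure_map (by fun_prop)
    · rw [Measure.map_map measurable_fst (by fun_prop)]
      exact (gaussian_eq_map m σ).symm
    · rw [Measure.map_map measurable_snd (by fun_prop)]
      exact (gaussian_eq_map m' σ').symm
    · rw [lintegral_map hfm.ennreal_ofReal (by fun_prop)]
      have hpt : ∀ x : ℝ, ((σ:ℝ)*x+m - ((σ':ℝ)*x+m'))^2
          = (((σ:ℝ)-(σ':ℝ))*x + (m - m'))^2 := fun x => by ring
      simp_rw [hpt]
      rw [← ofReal_integral_eq_lintegral_ofReal (std_integrable_affine _ _)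
        (Filter.Eventually.of_forall fun x => sq_nonneg _), std_integral_affine]
      congr 1
      ring
  · -- lower bound
    refine le_sInf fun r hr => ?_
    obtain ⟨γ, hγp, hfst, hsnd, rfl⟩ := hr
    by_cases htop : ∫⁻ p, ENNReal.ofReal ((p.1 - p.2)^2) ∂γ = ⊤
    · rw [htop]; exact le_top
    have hm1 : Measurable (fun x : ℝ => x) := measurable_id
    have hm2 : Measurable (fun x : ℝ => (x - m)^2) := (measurable_id.sub_const m).pow_const 2
    have hm2' : Measurable (fun x : ℝ => (x - m')^2) := (measurable_id.sub_const m').pow_const 2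
    -- integrability of f
    have hInt : Integrable (fun p : ℝ × ℝ => (p.1 - p.2)^2) γ := by
      refine ⟨hfm.aestronglyMeasurable, ?_⟩
      rw [hasFiniteIntegral_iff_ofReal (Filter.Eventually.of_forall fun p => sq_nonneg _)]
      exact lt_top_iff_ne_top.2 htop
    -- marginal facts
    have hu1 : Integrable (fun p : ℝ × ℝ => p.1) γ := by
      have h := nu_integrable_id m σ
      rw [← hfst, integrable_map_measure hm1.aestronglyMeasurable
        measurable_fst.aemeasurable] at h
      exact h
    have hv1 : Integrable (fun p : ℝ × ℝ => p.2) γ := by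
      have h := nu_integrable_id m' σ'
      rw [← hsnd, integrable_map_measure hm1.aestronglyMeasurable
        measurable_snd.aemeasurable] at h
      exact h
    have he1 : ∫ p : ℝ × ℝ, p.1 ∂γ = m := by
      have h := nu_integral_id m σ
      rwa [← hfst, integral_map measurable_fst.aemeasurable hm1.aestronglyMeasurable] at h
    have he1' : ∫ p : ℝ × ℝ, p.2 ∂γ = m' := by
      have h := nu_integral_id m' σ'
      rwa [← hsnd, integral_map measurable_snd.aemeasurable hm1.aestronglyMeasurable] at h
    have hu2 : Integrable (fun p : ℝ × ℝ => (p.1 - m)^2) γ := by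
      have h := nu_integrable_sq m σ
      rw [← hfst, integrable_map_measure hm2.aestronglyMeasurable
        measurable_fst.aemeasurable] at h
      exact h
    have hv2 : Integrable (fun p : ℝ × ℝ => (p.2 - m')^2) γ := by
      have h := nu_integrable_sq m' σ'
      rw [← hsnd, integrable_map_measure hm2'.aestronglyMeasurable
        measurable_snd.aemeasurable] at h
      exact h
    have he2 : ∫ p : ℝ × ℝ, (p.1 - m)^2 ∂γ = (σ:ℝ)^2 := by
      have h := nu_integral_sq m σ
      rwa [← hfst, integral_map measurable_fst.aemeasurable hm2.aestronglyMeasurable] at h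
    have he2' : ∫ p : ℝ × ℝ, (p.2 - m')^2 ∂γ = (σ':ℝ)^2 := by
      have h := nu_integral_sq m' σ'
      rwa [← hsnd, integral_map measurable_snd.aemeasurable hm2'.aestronglyMeasurable] at h
    -- covariance integrable
    have hsum : Integrable (fun p : ℝ × ℝ => (p.1 - m)^2 + (p.2 - m')^2) γ := hu2.add hv2
    have huv : Integrable (fun p : ℝ × ℝ => (p.1 - m) * (p.2 - m')) γ := by
      refine Integrable.mono' (hsum.const_mul (1/2))
        ((measurable_fst.sub_const m).mul (measurable_snd.sub_const m')).aestronglyMeasurable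
        (Filter.Eventually.of_forall fun p => ?_)
      rw [Real.norm_eq_abs, abs_mul]
      nlinarith [sq_nonneg (|p.1 - m| - |p.2 - m'|), sq_abs (p.1 - m), sq_abs (p.2 - m'),
        abs_nonneg (p.1 - m), abs_nonneg (p.2 - m')]
    set I := ∫ p : ℝ × ℝ, (p.1 - m) * (p.2 - m') ∂γ with hI
    have hσ : (0:ℝ) ≤ σ := σ.coe_nonneg
    have hσ' : (0:ℝ) ≤ σ' := σ'.coe_nonneg
    -- Cauchy-Schwarz-like bound via AM-GM and a limit
    have ht : ∀ t : ℝ, 0 < t → 2 * I ≤ t * (σ:ℝ)^2 + (σ':ℝ)^2 / t := by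
      intro t htpos
      have hptw : ∀ p : ℝ × ℝ, 2 * ((p.1 - m) * (p.2 - m'))
          ≤ t * (p.1 - m)^2 + (p.2 - m')^2 / t := by
        intro p
        rw [← sub_nonneg]
        have heq : t * (p.1 - m)^2 + (p.2 - m')^2 / t - 2 * ((p.1 - m) * (p.2 - m'))
            = (t * (p.1 - m) - (p.2 - m'))^2 / t := by
          field_simp
          ring
        rw [heq]
        positivity
      have hT : Integrable (fun p : ℝ × ℝ => t * (p.1 - m)^2 + (p.2 - m')^2 / t) γ :=
        (hu2.const_mul t).add (hv2.div_const t)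
      have hmono := integral_mono (huv.const_mul 2) hT hptw
      rwa [integral_const_mul, integral_add (hu2.const_mul t) (hv2.div_const t),
        integral_const_mul, integral_div, he2, he2'] at hmono
    have hδ : ∀ δ : ℝ, 0 < δ → 2 * I ≤ 2 * ((σ:ℝ) + δ) * ((σ':ℝ) + δ) := by
      intro δ hδpos
      have htpos : (0:ℝ) < ((σ':ℝ) + δ) / ((σ:ℝ) + δ) := by positivity
      refine (ht _ htpos).trans ?_
      have hne : ((σ:ℝ) + δ) ≠ 0 := by positivity
      have hne' : ((σ':ℝ) + δ) ≠ 0 := by positivity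
      have e1 : ((σ':ℝ) + δ) / ((σ:ℝ) + δ) * (σ:ℝ)^2 + (σ':ℝ)^2 / (((σ':ℝ) + δ) / ((σ:ℝ) + δ))
          = (((σ':ℝ) + δ)^2 * (σ:ℝ)^2 + (σ':ℝ)^2 * ((σ:ℝ) + δ)^2)
            / (((σ:ℝ) + δ) * ((σ':ℝ) + δ)) := by
        field_simp
      rw [e1, div_le_iff₀ (by positivity)]
      have p1 : ((σ':ℝ) + δ)^2 * (σ:ℝ)^2 ≤ ((σ':ℝ) + δ)^2 * ((σ:ℝ) + δ)^2 :=
        mul_le_mul_of_nonneg_left (by nlinarith) (sq_nonneg _)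
      have p2 : (σ':ℝ)^2 * ((σ:ℝ) + δ)^2 ≤ ((σ':ℝ) + δ)^2 * ((σ:ℝ) + δ)^2 :=
        mul_le_mul_of_nonneg_right (by nlinarith) (sq_nonneg _)
      nlinarith [p1, p2]
    have hkey : 2 * I ≤ 2 * (σ:ℝ) * (σ':ℝ) := by
      have hcont : Tendsto (fun δ : ℝ => 2 * ((σ:ℝ) + δ) * ((σ':ℝ) + δ))
          (nhdsWithin 0 (Set.Ioi 0)) (nhds (2 * (σ:ℝ) * (σ':ℝ))) := by
        have hc : Continuous fun δ : ℝ => 2 * ((σ:ℝ) + δ) * ((σ':ℝ) + δ) := by continuity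
        have h0 := (hc.tendsto 0).mono_left
          (nhdsWithin_le_nhds (s := Set.Ioi (0:ℝ)))
        simpa using h0
      exact ge_of_tendsto hcont (eventually_nhdsWithin_of_forall fun δ hδ' => hδ δ hδ')
    -- expansion
    have hptw2 : ∀ p : ℝ × ℝ, (p.1 - p.2)^2
        = ((p.1 - m)^2 + (p.2 - m')^2 + (2*(m - m')) * p.1)
          + ((-2) * ((p.1 - m) * (p.2 - m')) + (-2*(m - m')) * p.2)
          + ((m - m')^2 - 2*(m-m')*m + 2*(m-m')*m') := fun p => by ring
    have hP1 : Integrable (fun p : ℝ × ℝ =>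
        (p.1 - m)^2 + (p.2 - m')^2 + (2*(m - m')) * p.1) γ :=
      (hu2.add hv2).add (hu1.const_mul _)
    have hP2 : Integrable (fun p : ℝ × ℝ =>
        (-2) * ((p.1 - m) * (p.2 - m')) + (-2*(m - m')) * p.2) γ :=
      (huv.const_mul _).add (hv1.const_mul _)
    have hP12 : Integrable (fun p : ℝ × ℝ =>
        ((p.1 - m)^2 + (p.2 - m')^2 + (2*(m - m')) * p.1)
          + ((-2) * ((p.1 - m) * (p.2 - m')) + (-2*(m - m')) * p.2)) γ := hP1.add hP2
    have hval : ∫ p : ℝ × ℝ, (p.1 - p.2)^2 ∂γ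
        = ((σ:ℝ)^2 + (σ':ℝ)^2 + (2*(m - m')) * m)
          + ((-2) * I + (-2*(m - m')) * m')
          + ((m - m')^2 - 2*(m-m')*m + 2*(m-m')*m') := by
      simp_rw [hptw2]
      rw [integral_add hP12 (integrable_const _), integral_add hP1 hP2,
        integral_add hsum (hu1.const_mul _), integral_add hu2 hv2,
        integral_add (huv.const_mul _) (hv1.const_mul _),
        integral_const_mul, integral_const_mul, integral_const_mul,
        he2, he2', he1, he1', integral_const]
      simp [hI]
    have hreal : (m - m')^2 + ((σ:ℝ) - (σ':ℝ))^2 ≤ ∫ p : ℝ × ℝ, (p.1 - p.2)^2 ∂γ := by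
      rw [hval]
      nlinarith [hkey]
    rw [← ofReal_integral_eq_lintegral_ofReal hInt
      (Filter.Eventually.of_forall fun p => sq_nonneg _)]
    exact ENNReal.ofReal_le_ofReal hreal
end

section
/- Let A = Σ^{-1/2}(Σ^{1/2} Σ* Σ^{1/2})^{1/2} Σ^{-1/2}, where Σ is a positive definite symmetric matrix and Σ* is positive semidefinite symmetric. Then A Σ Aᵀ = Σ*. -/
open Matrix

/-- If `S` is the positive semidefinite square root of a positive definite `Σ`,
`T` the positive semidefinite square root of `S * Σ* * S`, and
`A = S⁻¹ * T * S⁻¹ = Σ^{-1/2} (Σ^{1/2} Σ* Σ^{1/2})^{1/2} Σ^{-1/2}`,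
then `A * Σ * Aᵀ = Σ*`. -/
theorem stmt_7 {d : ℕ} (Sg Sgs S T : Matrix (Fin d) (Fin d) ℝ)
    (hSg : Sg.PosDef) (hSgs : Sgs.PosSemidef)
    (hS : S.PosSemidef) (hSS : S * S = Sg)
    (hT : T.PosSemidef) (hTT : T * T = S * Sgs * S) :
    (S⁻¹ * T * S⁻¹) * Sg * (S⁻¹ * T * S⁻¹)ᵀ = Sgs := by
  have hdet : IsUnit S.det := by
    have h : S.det * S.det = Sg.det := by rw [← det_mul, hSS]
    have : Sg.det ≠ 0 := ne_of_gt hSg.det_pos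
    exact isUnit_iff_ne_zero.mpr (fun h0 => this (by rw [← h, h0, mul_zero]))
  have hSsymm : Sᵀ = S := hS.isHermitian.eq
  have hTsymm : Tᵀ = T := hT.isHermitian.eq
  have hinv : (S⁻¹)ᵀ = S⁻¹ := by rw [Matrix.transpose_nonsing_inv, hSsymm]
  have hmul : S⁻¹ * S = 1 := nonsing_inv_mul S hdet
  have hmul' : S * S⁻¹ = 1 := mul_nonsing_inv S hdet
  calc (S⁻¹ * T * S⁻¹) * Sg * (S⁻¹ * T * S⁻¹)ᵀ
      = S⁻¹ * T * (S⁻¹ * (S * S) * S⁻¹) * T * S⁻¹ := by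
        rw [← hSS, transpose_mul, transpose_mul, hinv, hTsymm]; noncomm_ring
    _ = S⁻¹ * (T * T) * S⁻¹ := by
        rw [← mul_assoc S⁻¹ S S, hmul, one_mul, hmul', mul_one, mul_assoc, mul_assoc, ← mul_assoc T T, ← mul_assoc]
    _ = Sgs := by
        rw [hTT, ← mul_assoc, ← mul_assoc, hmul, one_mul, mul_assoc, hmul', mul_one]
end
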